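/- arXiv:1712.05665 — 2 statements merged into one kernel-verified Lean document; each statement's English description precedes it below -/
import Mathlib

section
/- Succ-rule correctness: let F₁,…,Fₙ be formulas in negation normal form having no surface occurrence of any ∀-subformula. If the propositionalization ||F₁|| ∨ … ∨ ||Fₙ|| (replacing every surface ∃-subformula by ⊥) is a propositional tautology, then F₁ ∨ … ∨ Fₙ is valid. -/
/-! First-order formulas in negation normal form, over a language with
function symbols `Fn n` and relation symbols `Rl n` of each arity `n`.
Variables are de Bruijn indices. -/

/-- First-order terms. -/
inductive Tm (Fn : ℕ → Type) : Type where
  | var : ℕ → Tm Fn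
  | func : {n : ℕ} → Fn n → (Fin n → Tm Fn) → Tm Fn

/-- Formulas in negation normal form: negation is applied only to atoms. -/
inductive Fm (Fn Rl : ℕ → Type) : Type where
  | atom : {n : ℕ} → Rl n → (Fin n → Tm Fn) → Fm Fn Rl
  | natom : {n : ℕ} → Rl n → (Fin n → Tm Fn) → Fm Fn Rl
  | tru : Fm Fn Rl
  | fls : Fm Fn Rl
  | and : Fm Fn Rl → Fm Fn Rl → Fm Fn Rl
  | or : Fm Fn Rl → Fm Fn Rl → Fm Fn Rl
  | all : Fm Fn Rl → Fm Fn Rl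
  | ex : Fm Fn Rl → Fm Fn Rl

/-- A first-order structure: a nonempty domain together with interpretations
of the function and relation symbols. -/
structure Str (Fn Rl : ℕ → Type) where
  Dom : Type
  nonempty : Nonempty Dom
  fI : ∀ n, Fn n → (Fin n → Dom) → Dom
  rI : ∀ n, Rl n → (Fin n → Dom) → Prop

/-- Value of a term in a structure under a variable assignment. -/
def Tm.eval {Fn : ℕ → Type} {D : Type} (fI : ∀ n, Fn n → (Fin n → D) → D)
    (env : ℕ → D) : Tm Fn → D
  | .var k => env k
  | .func f ts => fI _ f fun i => (ts i).eval fI env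

/-- Extending an assignment with a value for de Bruijn index `0`. -/
def econs {D : Type} (d : D) (env : ℕ → D) : ℕ → D
  | 0 => d
  | n + 1 => env n

/-- Tarskian satisfaction. -/
def Fm.eval {Fn Rl : ℕ → Type} (S : Str Fn Rl) (env : ℕ → S.Dom) :
    Fm Fn Rl → Prop
  | .atom r ts => S.rI _ r fun i => (ts i).eval S.fI env
  | .natom r ts => ¬ S.rI _ r fun i => (ts i).eval S.fI env
  | .tru => True
  | .fls => False
  | .and f g => f.eval S env ∧ g.eval S env
  | .or f g => f.eval S env ∨ g.eval S env
  | .all f => ∀ d : S.Dom, f.eval S (econs d env)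
  | .ex f => ∃ d : S.Dom, f.eval S (econs d env)

/-- Validity: truth in every structure (with nonempty domain) under every
assignment. -/
def Fm.Valid {Fn Rl : ℕ → Type} (F : Fm Fn Rl) : Prop :=
  ∀ (S : Str Fn Rl) (env : ℕ → S.Dom), F.eval S env

/-- Propositionalization `‖F‖`: replace each outermost `∃`-subformula by `⊥`
and each outermost `∀`-subformula by `⊤`. -/
def Fm.prp {Fn Rl : ℕ → Type} : Fm Fn Rl → Fm Fn Rl
  | .atom r ts => .atom r ts
  | .natom r ts => .natom r ts
  | .tru => .tru
  | .fls => .fls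
  | .and f g => .and f.prp g.prp
  | .or f g => .or f.prp g.prp
  | .all _ => .tru
  | .ex _ => .fls

/-- Propositional evaluation of a quantifier-free formula under a truth
assignment `v` to the atomic formulas (distinct atoms are independent
propositional variables).  (The quantifier cases are junk values, never used
on quantifier-free formulas.) -/
def Fm.peval {Fn Rl : ℕ → Type} (v : ∀ n, Rl n → (Fin n → Tm Fn) → Prop) :
    Fm Fn Rl → Prop
  | .atom r ts => v _ r ts
  | .natom r ts => ¬ v _ r ts
  | .tru => True
  | .fls => False
  | .and f g => f.peval v ∧ g.peval v
  | .or f g => f.peval v ∨ g.peval v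
  | .all _ => False
  | .ex _ => False

/-- The disjunction of a sequent (list of formulas). -/
def disj {Fn Rl : ℕ → Type} (l : List (Fm Fn Rl)) : Fm Fn Rl :=
  l.foldr Fm.or Fm.fls

/-- A formula with no surface occurrence of a `∀`-subformula. -/
def Fm.NoSurfAll {Fn Rl : ℕ → Type} : Fm Fn Rl → Prop
  | .atom _ _ => True
  | .natom _ _ => True
  | .tru => True
  | .fls => True
  | .and f g => f.NoSurfAll ∧ g.NoSurfAll
  | .or f g => f.NoSurfAll ∧ g.NoSurfAll
  | .all _ => False
  | .ex _ => True

lemma disj_nsa_12 {Fn Rl : ℕ → Type} (l : List (Fm Fn Rl))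
    (ha : ∀ F ∈ l, F.NoSurfAll) : (disj l).NoSurfAll := by
  induction l with
  | nil => trivial
  | cons F t ih =>
      exact ⟨ha F (by simp), ih fun G hG => ha G (by simp [hG])⟩

lemma key_12 {Fn Rl : ℕ → Type} (S : Str Fn Rl) (env : ℕ → S.Dom)
    (F : Fm Fn Rl) (hF : F.NoSurfAll)
    (hp : F.prp.peval (fun n r ts => S.rI n r fun i => (ts i).eval S.fI env)) :
    F.eval S env := by
  induction F with
  | atom r ts => exact hp
  | natom r ts => exact hp
  | tru => trivial
  | fls => exact hp
  | and f g ihf ihg => exact ⟨ihf hF.1 hp.1, ihg hF.2 hp.2⟩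
  | or f g ihf ihg =>
      cases hp with
      | inl hp => exact Or.inl (ihf hF.1 hp)
      | inr hp => exact Or.inr (ihg hF.2 hp)
  | all f ih => exact absurd hF id
  | ex f ih => exact absurd hp id

/-- Succ-rule correctness: for a sequent `F₁, …, Fₙ` whose formulas have no
surface occurrence of a `∀`-subformula, if the propositionalization
`‖F₁‖ ∨ … ∨ ‖Fₙ‖` (every surface `∃`-subformula replaced by `⊥`) is a
propositional tautology, then `F₁ ∨ … ∨ Fₙ` is valid. -/
theorem stmt_12 {Fn Rl : ℕ → Type} (l : List (Fm Fn Rl))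
    (ha : ∀ F ∈ l, F.NoSurfAll)
    (h : ∀ v : ∀ n, Rl n → (Fin n → Tm Fn) → Prop, (disj l).prp.peval v) :
    (disj l).Valid := by
  intro S env
  exact key_12 S env (disj l) (disj_nsa_12 l ha) (h _)
end

section
/- Compactness for countable propositional logic: if Z is a set of propositional formulas such that every truth assignment satisfies at least one formula of Z (i.e. the possibly infinite disjunction of Z is valid), then there is a finite subset Z' ⊆ Z whose disjunction is a propositional tautology. -/
/-- Propositional formulas over countably many propositional variables. -/
inductive PropFm : Type where
  | var : ℕ → PropFm
  | tru : PropFm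
  | fls : PropFm
  | not : PropFm → PropFm
  | and : PropFm → PropFm → PropFm
  | or : PropFm → PropFm → PropFm
  | imp : PropFm → PropFm → PropFm

/-- Truth value of a propositional formula under a truth assignment. -/
def PropFm.eval (v : ℕ → Bool) : PropFm → Bool
  | .var n => v n
  | .tru => true
  | .fls => false
  | .not f => !f.eval v
  | .and f g => f.eval v && g.eval v
  | .or f g => f.eval v || g.eval v
  | .imp f g => !f.eval v || g.eval v

lemma PropFm.continuous_eval (f : PropFm) :
    Continuous (fun v : ℕ → Bool => f.eval v) := by
  induction f with
  | var n => exact continuous_apply n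
  | tru => exact continuous_const
  | fls => exact continuous_const
  | not f ihf =>
      exact (continuous_of_discreteTopology (f := Bool.not)).comp ihf
  | and f g ihf ihg =>
      exact (continuous_of_discreteTopology (f := fun p : Bool × Bool => p.1 && p.2)).comp
        (ihf.prodMk ihg)
  | or f g ihf ihg =>
      exact (continuous_of_discreteTopology (f := fun p : Bool × Bool => p.1 || p.2)).comp
        (ihf.prodMk ihg)
  | imp f g ihf ihg =>
      exact (continuous_of_discreteTopology (f := fun p : Bool × Bool => !p.1 || p.2)).comp
        (ihf.prodMk ihg)

/-- Compactness for countable propositional logic, disjunctive form: if every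
truth assignment satisfies at least one formula of `Z`, then some finite
subset `Z' ⊆ Z` has a tautologous disjunction, i.e. every truth assignment
satisfies at least one formula of `Z'`. -/
theorem stmt_13 (Z : Set PropFm)
    (h : ∀ v : ℕ → Bool, ∃ φ ∈ Z, φ.eval v = true) :
    ∃ Z' : Finset PropFm, ↑Z' ⊆ Z ∧ ∀ v : ℕ → Bool, ∃ φ ∈ Z', φ.eval v = true := by
  have hopen : ∀ φ : Z, IsOpen {v : ℕ → Bool | (φ : PropFm).eval v = true} :=
    fun φ => (isOpen_discrete {true}).preimage (φ : PropFm).continuous_eval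
  have hcover : (Set.univ : Set (ℕ → Bool)) ⊆ ⋃ φ : Z, {v | (φ : PropFm).eval v = true} := by
    intro v _
    obtain ⟨φ, hφZ, hφ⟩ := h v
    exact Set.mem_iUnion.2 ⟨⟨φ, hφZ⟩, hφ⟩
  obtain ⟨t, ht⟩ := isCompact_univ.elim_finite_subcover _ hopen hcover
  classical
  refine ⟨t.image Subtype.val, ?_, ?_⟩
  · intro φ hφ
    simp only [Finset.coe_image, Set.mem_image] at hφ
    obtain ⟨⟨ψ, hψ⟩, _, rfl⟩ := hφ
    exact hψ
  · intro v
    obtain ⟨φ, hφt, hφ⟩ := Set.mem_iUnion₂.1 (ht (Set.mem_univ v))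
    exact ⟨φ, Finset.mem_image_of_mem _ hφt, hφ⟩
end
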